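/- arXiv:1505.00412 — 2 statements merged into one kernel-verified Lean document; each statement's English description precedes it below -/
import Mathlib

section
/- Contractivity of the decreasing rearrangement in L^p: for u, v ∈ L^p(Ω) with 1 ≤ p < ∞, ‖u_* − v_*‖_{L^p(0,|Ω|)} ≤ ‖u − v‖_{L^p(Ω)}. -/
/-! For `s ∈ (0, |Ω|)` the rearrangement is the generalized inverse of the distribution function:
`u_*(s) ≤ t ↔ m_u(t) ≤ s`. Writing `(a - b - τ)⁺` as the length of `[b + τ, a)` and exchanging the
order of integration, this gives `∫ (u_* - v_* - τ)⁺ ≤ ∫_Ω (u - v - τ)⁺` for every `τ`,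
because `{s : v_*(s) + τ ≤ t < u_*(s)} ⊆ [m_v(t - τ), m_u(t))` and
`m_u(t) ≤ m_v(t - τ) + |{v + τ ≤ t < u}|`.
The same holds with `u` and `v` exchanged, and for `p > 1` the identity
`|a|^p = ∫_0^∞ p(p-1)τ^(p-2) ((a - τ)⁺ + (-a - τ)⁺) dτ` turns these into the `L^p` bound
(for `p = 1` take `τ = 0`). -/

open MeasureTheory Set
open scoped ENNReal NNReal

/-- The distribution function `m_u(q) = |{x ∈ Ω : u(x) > q}|`. -/
noncomputable def distFun {d : ℕ} (Ω : Set (Fin d → ℝ)) (u : (Fin d → ℝ) → ℝ) (q : ℝ) : ℝ :=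
  (volume {x ∈ Ω | q < u x}).toReal

/-- The decreasing rearrangement `u_*(s) = inf {q : m_u(q) ≤ s}`. -/
noncomputable def decRear {d : ℕ} (Ω : Set (Fin d → ℝ)) (u : (Fin d → ℝ) → ℝ) (s : ℝ) : ℝ :=
  sInf {q : ℝ | distFun Ω u q ≤ s}

lemma setOf_le_eq_Ici_sInf {α β : Type*} [ConditionallyCompleteLinearOrder α] [LinearOrder β]
    {m : α → β} {s : β} (hm : Antitone m) (hlow : ∃ q, m q ≤ s) (hup : ∃ q, s < m q)
    (hrc : ∀ t, s < m t → ∃ t' > t, s < m t') :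
    {q | m q ≤ s} = Ici (sInf {q | m q ≤ s}) := by
  have hlb : ∀ t, s < m t → t ∈ lowerBounds {q | m q ≤ s} := fun t ht q hq =>
    le_of_not_gt fun hqt => (hq.trans_lt ht).not_ge (hm hqt.le)
  obtain ⟨q₀, hq₀⟩ := hup
  ext q
  refine ⟨fun hq => csInf_le ⟨q₀, hlb q₀ hq₀⟩ hq, fun (hq : _ ≤ q) => ?_⟩
  refine show m q ≤ s from le_of_not_gt fun hsq => ?_
  obtain ⟨t', hqt', hst'⟩ := hrc q hsq
  exact (hqt'.trans_le (le_csInf hlow (hlb t' hst'))).not_ge hq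

section LayerCake

variable {α : Type*} [MeasurableSpace α] {μ : Measure α} [SFinite μ] {f g : α → ℝ}

lemma lintegral_ofReal_sub_eq_lintegral_measure (hf : Measurable f) (hg : Measurable g) :
    ∫⁻ x, ENNReal.ofReal (f x - g x) ∂μ = ∫⁻ t, μ {x | g x ≤ t ∧ t < f x} := by
  have hE : MeasurableSet {z : α × ℝ | g z.1 ≤ z.2 ∧ z.2 < f z.1} :=
    (measurableSet_le (hg.comp measurable_fst) measurable_snd).inter
      (measurableSet_lt measurable_snd (hf.comp measurable_fst))
  calc ∫⁻ x, ENNReal.ofReal (f x - g x) ∂μ = ∫⁻ x, volume (Ico (g x) (f x)) ∂μ := by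
        simp only [Real.volume_Ico]
    _ = μ.prod volume {z : α × ℝ | g z.1 ≤ z.2 ∧ z.2 < f z.1} := (Measure.prod_apply hE).symm
    _ = ∫⁻ t, μ {x | g x ≤ t ∧ t < f x} := Measure.prod_apply_symm hE

lemma lintegral_ofReal_sub_eq_lintegral_measure' (hf : AEMeasurable f μ) (hg : AEMeasurable g μ) :
    ∫⁻ x, ENNReal.ofReal (f x - g x) ∂μ = ∫⁻ t, μ {x | g x ≤ t ∧ t < f x} := by
  calc ∫⁻ x, ENNReal.ofReal (f x - g x) ∂μ = ∫⁻ x, ENNReal.ofReal (hf.mk f x - hg.mk g x) ∂μ := by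
        refine lintegral_congr_ae ?_
        filter_upwards [hf.ae_eq_mk, hg.ae_eq_mk] with x hfx hgx
        rw [hfx, hgx]
    _ = ∫⁻ t, μ {x | hg.mk g x ≤ t ∧ t < hf.mk f x} :=
        lintegral_ofReal_sub_eq_lintegral_measure hf.measurable_mk hg.measurable_mk
    _ = ∫⁻ t, μ {x | g x ≤ t ∧ t < f x} := by
        refine lintegral_congr fun t => measure_congr ?_
        filter_upwards [hf.ae_eq_mk, hg.ae_eq_mk] with x hfx hgx
        change (_ ∧ _) = (_ ∧ _)
        rw [hfx, hgx]

end LayerCake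

section RpowRepresentation

lemma integral_rpow_mul_sub {r a : ℝ} (hr : 1 < r) (ha : 0 ≤ a) :
    ∫ τ in (0)..a, r * (r - 1) * τ ^ (r - 2) * (a - τ) = a ^ r := by
  have hF : ∀ τ ∈ Ioo 0 a, HasDerivAt (fun τ : ℝ => r * a * τ ^ (r - 1) - (r - 1) * τ ^ r)
      (r * (r - 1) * τ ^ (r - 2) * (a - τ)) τ := by
    intro τ hτ
    have h1 := (Real.hasDerivAt_rpow_const (p := r - 1) (Or.inl hτ.1.ne')).const_mul (r * a)
    have h2 := (Real.hasDerivAt_rpow_const (p := r) (Or.inl hτ.1.ne')).const_mul (r - 1)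
    refine (h1.sub h2).congr_deriv ?_
    rw [show r - 1 - 1 = r - 2 by ring, show r - 1 = r - 2 + 1 by ring,
      Real.rpow_add_one hτ.1.ne']
    ring
  have hcont : ContinuousOn (fun τ : ℝ => r * a * τ ^ (r - 1) - (r - 1) * τ ^ r) (Icc 0 a) :=
    (((Real.continuous_rpow_const (by linarith)).const_mul _).sub
      ((Real.continuous_rpow_const (by linarith)).const_mul _)).continuousOn
  have hint : IntervalIntegrable (fun τ : ℝ => r * (r - 1) * τ ^ (r - 2) * (a - τ)) volume 0 a :=
    ((intervalIntegral.intervalIntegrable_rpow' (by linarith)).const_mul _).mul_continuousOn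
      (continuous_const.sub continuous_id).continuousOn
  rw [intervalIntegral.integral_eq_sub_of_hasDerivAt_of_le ha hcont hF hint,
    Real.zero_rpow (by linarith), Real.zero_rpow (by linarith),
    show r = r - 1 + 1 by ring, Real.rpow_add_one' ha (by linarith)]
  ring_nf

lemma lintegral_rpow_mul_ofReal_sub {r a : ℝ} (hr : 1 < r) (ha : 0 ≤ a) :
    ∫⁻ τ in Ioi 0, ENNReal.ofReal (r * (r - 1) * τ ^ (r - 2)) * ENNReal.ofReal (a - τ) =
      ENNReal.ofReal (a ^ r) := by
  have hw : ∀ τ : ℝ, 0 ≤ τ → 0 ≤ r * (r - 1) * τ ^ (r - 2) := fun τ hτ =>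
    mul_nonneg (mul_nonneg (by linarith) (by linarith)) (Real.rpow_nonneg hτ _)
  have hvanish : ∫⁻ τ in Ioi a,
      ENNReal.ofReal (r * (r - 1) * τ ^ (r - 2)) * ENNReal.ofReal (a - τ) = 0 := by
    refine setLIntegral_eq_zero measurableSet_Ioi fun τ hτ => ?_
    rw [ENNReal.ofReal_of_nonpos (show a - τ ≤ 0 by linarith [hτ.out]), mul_zero, Pi.zero_apply]
  have hint : IntegrableOn (fun τ : ℝ => r * (r - 1) * τ ^ (r - 2) * (a - τ)) (Ioc 0 a) :=
    (intervalIntegrable_iff_integrableOn_Ioc_of_le ha).1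
      (((intervalIntegral.intervalIntegrable_rpow' (by linarith)).const_mul _).mul_continuousOn
        (continuous_const.sub continuous_id).continuousOn)
  have hnonneg : 0 ≤ᵐ[volume.restrict (Ioc 0 a)] fun τ => r * (r - 1) * τ ^ (r - 2) * (a - τ) := by
    filter_upwards [ae_restrict_mem measurableSet_Ioc] with τ hτ
    exact mul_nonneg (hw τ hτ.1.le) (by linarith [hτ.2])
  rw [← Ioc_union_Ioi_eq_Ioi ha, lintegral_union measurableSet_Ioi (Ioc_disjoint_Ioi le_rfl),
    hvanish, add_zero, ← integral_rpow_mul_sub hr ha, intervalIntegral.integral_of_le ha,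
    ofReal_integral_eq_lintegral_ofReal hint hnonneg]
  refine setLIntegral_congr_fun measurableSet_Ioc fun τ hτ => ?_
  rw [ENNReal.ofReal_mul (hw τ hτ.1.le)]

lemma enorm_rpow_eq_lintegral {r : ℝ} (hr : 1 < r) (a : ℝ) :
    ‖a‖ₑ ^ r = ∫⁻ τ in Ioi 0, ENNReal.ofReal (r * (r - 1) * τ ^ (r - 2)) *
      (ENNReal.ofReal (a - τ) + ENNReal.ofReal (-a - τ)) := by
  wlog ha : 0 ≤ a generalizing a
  · simpa only [enorm_neg, neg_neg, add_comm (ENNReal.ofReal (-a - _))] using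
      this (-a) (by linarith)
  rw [Real.enorm_of_nonneg ha, ENNReal.ofReal_rpow_of_nonneg ha (by linarith),
    ← lintegral_rpow_mul_ofReal_sub hr ha]
  refine setLIntegral_congr_fun measurableSet_Ioi fun τ hτ => ?_
  rw [ENNReal.ofReal_of_nonpos (by linarith [hτ.out] : -a - τ ≤ 0), add_zero]

lemma enorm_eq_ofReal_add_ofReal_neg (a : ℝ) : ‖a‖ₑ = ENNReal.ofReal a + ENNReal.ofReal (-a) := by
  rcases le_total 0 a with ha | ha
  · rw [Real.enorm_of_nonneg ha, ENNReal.ofReal_of_nonpos (neg_nonpos.2 ha), add_zero]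
  · rw [← enorm_neg, Real.enorm_of_nonneg (neg_nonneg.2 ha), ENNReal.ofReal_of_nonpos ha, zero_add]

variable {α β : Type*} [MeasurableSpace α] [MeasurableSpace β] {μ : Measure α} {ν : Measure β}
  [SFinite μ] [SFinite ν] {f : α → ℝ} {g : β → ℝ}

lemma lintegral_enorm_rpow_eq (hf : AEMeasurable f μ) {r : ℝ} (hr : 1 < r) :
    ∫⁻ x, ‖f x‖ₑ ^ r ∂μ = ∫⁻ τ in Ioi 0, ENNReal.ofReal (r * (r - 1) * τ ^ (r - 2)) *
      (∫⁻ x, ENNReal.ofReal (f x - τ) ∂μ + ∫⁻ x, ENNReal.ofReal (-f x - τ) ∂μ) := by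
  have hpos : ∀ τ : ℝ, AEMeasurable (fun x => ENNReal.ofReal (f x - τ)) μ := fun τ =>
    (hf.sub_const τ).ennreal_ofReal
  have hneg : ∀ τ : ℝ, AEMeasurable (fun x => ENNReal.ofReal (-f x - τ)) μ := fun τ =>
    (hf.neg.sub_const τ).ennreal_ofReal
  simp_rw [enorm_rpow_eq_lintegral hr]
  rw [lintegral_lintegral_swap]
  · refine lintegral_congr fun τ => ?_
    rw [lintegral_const_mul'' _ (f := fun x => ENNReal.ofReal (f x - τ) + ENNReal.ofReal (-f x - τ))
        ((hpos τ).add (hneg τ)),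
      lintegral_add_left' (hpos τ)]
  · have hw : Measurable fun τ : ℝ => ENNReal.ofReal (r * (r - 1) * τ ^ (r - 2)) :=
      ((measurable_id.pow_const _).const_mul _).ennreal_ofReal
    exact (hw.comp measurable_snd).aemeasurable.mul
      ((hf.comp_fst.sub measurable_snd.aemeasurable).ennreal_ofReal.add
        (hf.neg.comp_fst.sub measurable_snd.aemeasurable).ennreal_ofReal)

lemma lintegral_enorm_rpow_le_of_lintegral_ofReal_sub_le (hf : AEMeasurable f μ)
    (hg : AEMeasurable g ν) {r : ℝ} (hr : 1 ≤ r)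
    (hpos : ∀ τ, 0 ≤ τ → ∫⁻ x, ENNReal.ofReal (f x - τ) ∂μ ≤ ∫⁻ y, ENNReal.ofReal (g y - τ) ∂ν)
    (hneg : ∀ τ, 0 ≤ τ → ∫⁻ x, ENNReal.ofReal (-f x - τ) ∂μ ≤ ∫⁻ y, ENNReal.ofReal (-g y - τ) ∂ν) :
    ∫⁻ x, ‖f x‖ₑ ^ r ∂μ ≤ ∫⁻ y, ‖g y‖ₑ ^ r ∂ν := by
  rcases hr.eq_or_lt with rfl | hr
  · simp only [ENNReal.rpow_one, enorm_eq_ofReal_add_ofReal_neg]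
    rw [lintegral_add_left' hf.ennreal_ofReal, lintegral_add_left' hg.ennreal_ofReal]
    simpa only [sub_zero] using add_le_add (hpos 0 le_rfl) (hneg 0 le_rfl)
  · rw [lintegral_enorm_rpow_eq hf hr, lintegral_enorm_rpow_eq hg hr]
    refine setLIntegral_mono' measurableSet_Ioi fun τ hτ => ?_
    gcongr
    exacts [hpos τ hτ.out.le, hneg τ hτ.out.le]

theorem eLpNorm_le_eLpNorm_of_lintegral_ofReal_sub_le {p : ℝ≥0∞} (hp1 : 1 ≤ p) (hp : p ≠ ⊤)
    (hf : AEMeasurable f μ) (hg : AEMeasurable g ν)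
    (hpos : ∀ τ, 0 ≤ τ → ∫⁻ x, ENNReal.ofReal (f x - τ) ∂μ ≤ ∫⁻ y, ENNReal.ofReal (g y - τ) ∂ν)
    (hneg : ∀ τ, 0 ≤ τ → ∫⁻ x, ENNReal.ofReal (-f x - τ) ∂μ ≤ ∫⁻ y, ENNReal.ofReal (-g y - τ) ∂ν) :
    eLpNorm f p μ ≤ eLpNorm g p ν := by
  have hp0 : p ≠ 0 := (zero_lt_one.trans_le hp1).ne'
  rw [eLpNorm_eq_lintegral_rpow_enorm_toReal hp0 hp, eLpNorm_eq_lintegral_rpow_enorm_toReal hp0 hp]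
  gcongr
  exact lintegral_enorm_rpow_le_of_lintegral_ofReal_sub_le hf hg
    (ENNReal.toReal_mono hp hp1) hpos hneg

end RpowRepresentation

section Rearrangement

variable {d : ℕ} {Ω : Set (Fin d → ℝ)} {u v : (Fin d → ℝ) → ℝ}

lemma antitone_superlevel : Antitone fun q : ℝ => {x ∈ Ω | q < u x} :=
  fun _ _ h _ hx => ⟨hx.1, h.trans_lt hx.2⟩

lemma volume_superlevel_ne_top (hΩ : volume Ω ≠ ⊤) (q : ℝ) : volume {x ∈ Ω | q < u x} ≠ ⊤ :=
  measure_ne_top_of_subset (sep_subset _ _) hΩ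

lemma lt_distFun_iff (hΩ : volume Ω ≠ ⊤) {s : ℝ} (hs : 0 ≤ s) (q : ℝ) :
    s < distFun Ω u q ↔ ENNReal.ofReal s < volume {x ∈ Ω | q < u x} :=
  (ENNReal.ofReal_lt_iff_lt_toReal hs (volume_superlevel_ne_top hΩ q)).symm

lemma distFun_antitone (hΩ : volume Ω ≠ ⊤) : Antitone (distFun Ω u) := fun _ _ h =>
  ENNReal.toReal_mono (volume_superlevel_ne_top hΩ _) (measure_mono (antitone_superlevel h))

lemma exists_distFun_le (hΩm : MeasurableSet Ω) (hΩ : volume Ω ≠ ⊤) (hu : Measurable u)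
    {s : ℝ} (hs : 0 < s) : ∃ q, distFun Ω u q ≤ s := by
  have hempty : ⋂ q : ℝ, {x ∈ Ω | q < u x} = ∅ :=
    eq_empty_of_forall_notMem fun x hx => (mem_iInter.1 hx (u x)).2.false
  have hinf := antitone_superlevel.measure_iInter
    (fun q => (hΩm.inter (measurableSet_lt measurable_const hu)).nullMeasurableSet)
    ⟨0, volume_superlevel_ne_top hΩ 0⟩
  rw [hempty, measure_empty, eq_comm] at hinf
  obtain ⟨q, hq⟩ := iInf_lt_iff.1 (hinf ▸ ENNReal.ofReal_pos.2 hs)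
  exact ⟨q, ENNReal.toReal_le_of_le_ofReal hs.le hq.le⟩

lemma exists_lt_distFun (hΩ : volume Ω ≠ ⊤) {s : ℝ} (hs : 0 ≤ s) (h : s < (volume Ω).toReal) :
    ∃ q, s < distFun Ω u q := by
  have hunion : ⋃ q : ℝ, {x ∈ Ω | q < u x} = Ω :=
    subset_antisymm (iUnion_subset fun _ => sep_subset _ _)
      fun x hx => mem_iUnion.2 ⟨u x - 1, hx, by linarith⟩
  rw [← ENNReal.ofReal_lt_iff_lt_toReal hs hΩ, ← hunion, antitone_superlevel.measure_iUnion,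
    lt_iSup_iff] at h
  simpa only [lt_distFun_iff hΩ hs] using h

lemma exists_gt_lt_distFun (hΩ : volume Ω ≠ ⊤) {s t : ℝ} (hs : 0 ≤ s) (h : s < distFun Ω u t) :
    ∃ t' > t, s < distFun Ω u t' := by
  have hmono : Monotone fun n : ℕ => {x ∈ Ω | t + 1 / (n + 1) < u x} := fun _ _ hmn =>
    antitone_superlevel (by gcongr)
  have hunion : ⋃ n : ℕ, {x ∈ Ω | t + 1 / (n + 1) < u x} = {x ∈ Ω | t < u x} := by
    refine subset_antisymm
      (iUnion_subset fun n => antitone_superlevel (le_add_of_nonneg_right (by positivity)))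
      fun x ⟨hx, htx⟩ => mem_iUnion.2 ?_
    obtain ⟨n, hn⟩ := exists_nat_one_div_lt (sub_pos.2 htx)
    exact ⟨n, hx, by linarith⟩
  rw [lt_distFun_iff hΩ hs, ← hunion, hmono.measure_iUnion, lt_iSup_iff] at h
  obtain ⟨n, hn⟩ := h
  exact ⟨t + 1 / (n + 1), lt_add_of_pos_right t (by positivity), (lt_distFun_iff hΩ hs _).2 hn⟩

lemma decRear_le_iff (hΩm : MeasurableSet Ω) (hΩ : volume Ω ≠ ⊤) (hu : Measurable u) {s : ℝ}
    (hs : s ∈ Ioo 0 (volume Ω).toReal) {t : ℝ} :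
    decRear Ω u s ≤ t ↔ distFun Ω u t ≤ s :=
  (Set.ext_iff.1 (setOf_le_eq_Ici_sInf (distFun_antitone hΩ) (exists_distFun_le hΩm hΩ hu hs.1)
    (exists_lt_distFun hΩ hs.1.le hs.2) fun _ => exists_gt_lt_distFun hΩ hs.1.le) t).symm

lemma aemeasurable_decRear (hΩm : MeasurableSet Ω) (hΩ : volume Ω ≠ ⊤) (hu : Measurable u) :
    AEMeasurable (decRear Ω u) (volume.restrict (Ioo 0 (volume Ω).toReal)) :=
  aemeasurable_restrict_of_antitoneOn measurableSet_Ioo fun _s hs _s' hs' hss' =>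
    (decRear_le_iff hΩm hΩ hu hs').2 (((decRear_le_iff hΩm hΩ hu hs).1 le_rfl).trans hss')

lemma volume_superlevel_le_add (t τ : ℝ) :
    volume {x ∈ Ω | t < u x} ≤
      volume {x ∈ Ω | t - τ < v x} + volume.restrict Ω {x | v x + τ ≤ t ∧ t < u x} := by
  calc volume {x ∈ Ω | t < u x}
      ≤ volume ({x ∈ Ω | t - τ < v x} ∪ {x | v x + τ ≤ t ∧ t < u x} ∩ Ω) := by
        refine measure_mono fun x ⟨hx, hux⟩ => ?_
        rcases lt_or_ge (t - τ) (v x) with hvx | hvx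
        exacts [Or.inl ⟨hx, hvx⟩, Or.inr ⟨⟨by linarith, hux⟩, hx⟩]
    _ ≤ _ := (measure_union_le _ _).trans (add_le_add_right (Measure.le_restrict_apply _ _) _)

lemma restrict_Ioo_setOf_decRear_le (hΩm : MeasurableSet Ω) (hΩ : volume Ω ≠ ⊤)
    (hu : Measurable u) (hv : Measurable v) (t τ : ℝ) :
    volume.restrict (Ioo 0 (volume Ω).toReal) {s | decRear Ω v s + τ ≤ t ∧ t < decRear Ω u s} ≤
      volume.restrict Ω {x | v x + τ ≤ t ∧ t < u x} := by
  calc volume.restrict (Ioo 0 (volume Ω).toReal) {s | decRear Ω v s + τ ≤ t ∧ t < decRear Ω u s}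
      ≤ volume (Ico (distFun Ω v (t - τ)) (distFun Ω u t)) := by
        rw [Measure.restrict_apply' measurableSet_Ioo]
        refine measure_mono fun s ⟨⟨hvs, hus⟩, hs⟩ => ⟨?_, ?_⟩
        · exact (decRear_le_iff hΩm hΩ hv hs).1 (by linarith)
        · exact not_le.1 fun h => hus.not_ge ((decRear_le_iff hΩm hΩ hu hs).2 h)
    _ = ENNReal.ofReal (distFun Ω u t - distFun Ω v (t - τ)) := Real.volume_Ico
    _ ≤ volume.restrict Ω {x | v x + τ ≤ t ∧ t < u x} := by
        rw [distFun, distFun, ENNReal.ofReal_sub _ ENNReal.toReal_nonneg,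
          ENNReal.ofReal_toReal (volume_superlevel_ne_top hΩ _),
          ENNReal.ofReal_toReal (volume_superlevel_ne_top hΩ _), tsub_le_iff_left]
        exact volume_superlevel_le_add t τ

lemma lintegral_decRear_sub_sub_le (hΩm : MeasurableSet Ω) (hΩ : volume Ω ≠ ⊤)
    (hu : Measurable u) (hv : Measurable v) (τ : ℝ) :
    ∫⁻ s in Ioo 0 (volume Ω).toReal, ENNReal.ofReal (decRear Ω u s - decRear Ω v s - τ) ≤
      ∫⁻ x in Ω, ENNReal.ofReal (u x - v x - τ) := by
  simp only [sub_sub]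
  rw [lintegral_ofReal_sub_eq_lintegral_measure' (aemeasurable_decRear hΩm hΩ hu)
      ((aemeasurable_decRear hΩm hΩ hv).add_const τ),
    lintegral_ofReal_sub_eq_lintegral_measure' hu.aemeasurable (hv.add_const τ).aemeasurable]
  exact lintegral_mono fun t => restrict_Ioo_setOf_decRear_le hΩm hΩ hu hv t τ

end Rearrangement

theorem decRear_contractive_Lp_general {d : ℕ} (Ω : Set (Fin d → ℝ)) (hΩo : IsOpen Ω)
    (hΩb : Bornology.IsBounded Ω) (p : ℝ≥0∞) (hp1 : 1 ≤ p) (hp2 : p ≠ ⊤)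
    (u v : (Fin d → ℝ) → ℝ) (hum : Measurable u) (hvm : Measurable v) :
    eLpNorm (fun s => decRear Ω u s - decRear Ω v s) p
        (volume.restrict (Ioo 0 (volume Ω).toReal)) ≤
      eLpNorm (fun x => u x - v x) p (volume.restrict Ω) := by
  have hΩm : MeasurableSet Ω := hΩo.measurableSet
  have hΩ : volume Ω ≠ ⊤ := hΩb.measure_lt_top.ne
  refine eLpNorm_le_eLpNorm_of_lintegral_ofReal_sub_le hp1 hp2
    ((aemeasurable_decRear hΩm hΩ hum).sub (aemeasurable_decRear hΩm hΩ hvm))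
    (hum.sub hvm).aemeasurable (fun τ _ => lintegral_decRear_sub_sub_le hΩm hΩ hum hvm τ)
    fun τ _ => ?_
  simpa only [neg_sub] using lintegral_decRear_sub_sub_le hΩm hΩ hvm hum τ

/-- Contractivity of the decreasing rearrangement in `L^p`, `1 ≤ p < ∞`:
`‖u_* − v_*‖_{L^p(0,|Ω|)} ≤ ‖u − v‖_{L^p(Ω)}`. -/
theorem decRear_contractive_Lp {d : ℕ} (Ω : Set (Fin d → ℝ)) (hΩo : IsOpen Ω)
    (hΩb : Bornology.IsBounded Ω) (p : ℝ≥0∞) (hp1 : 1 ≤ p) (hp2 : p ≠ ⊤)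
    (u v : (Fin d → ℝ) → ℝ) (hum : Measurable u) (hvm : Measurable v)
    (hu : MemLp u p (volume.restrict Ω)) (hv : MemLp v p (volume.restrict Ω)) :
    eLpNorm (fun s => decRear Ω u s - decRear Ω v s) p
        (volume.restrict (Ioo 0 (volume Ω).toReal)) ≤
      eLpNorm (fun x => u x - v x) p (volume.restrict Ω) :=
  decRear_contractive_Lp_general Ω hΩo hΩb p hp1 hp2 u v hum hvm
end

section
/- The neighborhood filter with homogeneous spatial kernel is a contrast change: there exists a function g : ℝ → ℝ such that Fu(x) = g(u(x)) for a.e. x ∈ Ω, given by g(t) = (∫_0^{|Ω|} K_h(t − u_*(s)) u_*(s) ds)/(∫_0^{|Ω|} K_h(t − u_*(s)) ds). -/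
/-!
The value of `Fu(x)` only involves the integrals `∫_Ω φ(u)` for `φ(w) = K_h(u(x) - w) w` and
`φ(w) = K_h(u(x) - w)`, and such integrals only depend on the law of `u`. That law is also the
law of `u_*` on `(0, |Ω|)`: by right continuity of the distribution function `m_u`, the set
`{s ∈ (0, |Ω|) | q < u_*(s)}` is exactly the interval `(0, m_u(q))`.
-/

open MeasureTheory Set

open Filter Topology

namespace MeasureTheory

theorem Measure.ext_of_Ioi {α : Type*} [TopologicalSpace α] {m : MeasurableSpace α}
    [SecondCountableTopology α] [ConditionallyCompleteLinearOrder α] [OrderTopology α]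
    [BorelSpace α] [NoMinOrder α] (μ ν : Measure α) [IsFiniteMeasure μ]
    (h : ∀ a, μ (Ioi a) = ν (Ioi a)) : μ = ν :=
  ext_of_Ioc μ ν fun a b hab => by
    rw [← Ioi_sdiff_Ioi, measure_sdiff (Ioi_subset_Ioi hab.le) nullMeasurableSet_Ioi
      (measure_ne_top _ _), measure_sdiff (Ioi_subset_Ioi hab.le) nullMeasurableSet_Ioi
      (h b ▸ measure_ne_top _ _), h a, h b]

variable {α : Type*} [MeasurableSpace α] {μ : Measure α} {f : α → ℝ}

noncomputable def distribution (μ : Measure α) (f : α → ℝ) (q : ℝ) : ℝ :=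
  μ.real (f ⁻¹' Ioi q)

noncomputable def decreasingRearrangement (μ : Measure α) (f : α → ℝ) (s : ℝ) : ℝ :=
  sInf {q | distribution μ f q ≤ s}

section FiniteMeasure

variable [IsFiniteMeasure μ]

lemma distribution_antitone : Antitone (distribution μ f) :=
  fun _ _ h => measureReal_mono (preimage_mono (Ioi_subset_Ioi h))

lemma distribution_le_measureReal_univ (q : ℝ) : distribution μ f q ≤ μ.real univ :=
  measureReal_mono (subset_univ _)

lemma tendsto_distribution_atTop (hf : Measurable f) :
    Tendsto (distribution μ f) atTop (𝓝 0) := by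
  have h := tendsto_measure_iInter_atTop (μ := μ) (s := fun q : ℝ => f ⁻¹' Ioi q)
    (fun _ => (hf measurableSet_Ioi).nullMeasurableSet)
    (fun _ _ h => preimage_mono (Ioi_subset_Ioi h)) ⟨0, measure_ne_top _ _⟩
  have hempty : ⋂ q : ℝ, f ⁻¹' Ioi q = ∅ :=
    eq_empty_of_forall_notMem fun x hx => lt_irrefl (f x) (mem_iInter.1 hx (f x))
  rw [hempty, measure_empty] at h
  exact (ENNReal.tendsto_toReal ENNReal.zero_ne_top).comp h

lemma tendsto_distribution_atBot :
    Tendsto (distribution μ f) atBot (𝓝 (μ.real univ)) := by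
  have h := tendsto_measure_iUnion_atBot (μ := μ) (s := fun q : ℝ => f ⁻¹' Ioi q)
    (fun _ _ h => preimage_mono (Ioi_subset_Ioi h))
  rw [← preimage_iUnion, iUnion_Ioi, preimage_univ] at h
  exact (ENNReal.tendsto_toReal (measure_ne_top _ _)).comp h

lemma continuousWithinAt_distribution_Ioi (hf : Measurable f) (q : ℝ) :
    ContinuousWithinAt (distribution μ f) (Ioi q) q := by
  -- `{f > r}` is the complement of `{f ≤ r}`, and these decrease to `{f ≤ q}` as `r ↓ q`.
  have h := tendsto_measure_biInter_gt (μ := μ) (s := fun r : ℝ => f ⁻¹' Iic r) (a := q)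
    (fun _ _ => (hf measurableSet_Iic).nullMeasurableSet)
    (fun _ _ _ hij => preimage_mono (Iic_subset_Iic.2 hij))
    ⟨q + 1, by linarith, measure_ne_top _ _⟩
  have hinter : ⋂ r > q, f ⁻¹' Iic r = f ⁻¹' Iic q := by
    ext x
    simp only [mem_iInter, mem_preimage, mem_Iic]
    exact forall_gt_imp_ge_iff_le_of_dense
  rw [hinter] at h
  have hcompl (r : ℝ) : distribution μ f r = μ.real univ - μ.real (f ⁻¹' Iic r) := by
    rw [distribution, ← measureReal_compl (hf measurableSet_Iic), ← preimage_compl, compl_Iic]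
  rw [ContinuousWithinAt, funext hcompl]
  exact tendsto_const_nhds.sub ((ENNReal.tendsto_toReal (measure_ne_top _ _)).comp h)

lemma exists_gt_lt_distribution (hf : Measurable f) {s q : ℝ} (h : s < distribution μ f q) :
    ∃ r > q, s < distribution μ f r :=
  (((continuousWithinAt_distribution_Ioi hf q).eventually (lt_mem_nhds h)).and
    self_mem_nhdsWithin).exists.imp fun _ hr => ⟨hr.2, hr.1⟩

lemma nonempty_setOf_distribution_le (hf : Measurable f) {s : ℝ} (hs : 0 < s) :
    {q | distribution μ f q ≤ s}.Nonempty :=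
  ((tendsto_distribution_atTop hf).eventually (eventually_le_nhds hs)).exists

lemma bddBelow_setOf_distribution_le {s : ℝ} (hs : s < μ.real univ) :
    BddBelow {q | distribution μ f q ≤ s} := by
  obtain ⟨q₀, hq₀⟩ := (tendsto_distribution_atBot.eventually (lt_mem_nhds hs)).exists
  refine ⟨q₀, fun q hq => ?_⟩
  by_contra! hlt
  exact (hq₀.trans_le (distribution_antitone hlt.le)).not_ge hq

theorem lt_decreasingRearrangement_iff (hf : Measurable f) {s : ℝ}
    (hs : s ∈ Ioo 0 (μ.real univ)) (q : ℝ) :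
    q < decreasingRearrangement μ f s ↔ s < distribution μ f q := by
  constructor
  · intro h
    by_contra! hle
    exact h.not_ge (csInf_le (bddBelow_setOf_distribution_le hs.2) hle)
  · intro h
    obtain ⟨r, hqr, hr⟩ := exists_gt_lt_distribution hf h
    refine hqr.trans_le (le_csInf (nonempty_setOf_distribution_le hf hs.1) fun q' hq' => ?_)
    by_contra! hlt
    exact (hq'.trans_lt hr).not_ge (distribution_antitone hlt.le)

lemma antitoneOn_decreasingRearrangement (hf : Measurable f) :
    AntitoneOn (decreasingRearrangement μ f) (Ioo 0 (μ.real univ)) :=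
  fun _ hs _ ht hst => csInf_le_csInf (bddBelow_setOf_distribution_le ht.2)
    (nonempty_setOf_distribution_le hf hs.1) fun _ hq => le_trans hq hst

lemma aemeasurable_decreasingRearrangement (hf : Measurable f) :
    AEMeasurable (decreasingRearrangement μ f) (volume.restrict (Ioo 0 (μ.real univ))) :=
  aemeasurable_restrict_of_antitoneOn measurableSet_Ioo (antitoneOn_decreasingRearrangement hf)

lemma preimage_Ioi_decreasingRearrangement_inter_Ioo (hf : Measurable f) (q : ℝ) :
    decreasingRearrangement μ f ⁻¹' Ioi q ∩ Ioo 0 (μ.real univ) =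
      Ioo 0 (distribution μ f q) := by
  ext s
  simp only [mem_inter_iff, mem_preimage, mem_Ioi]
  constructor
  · rintro ⟨hq, hs⟩
    exact ⟨hs.1, (lt_decreasingRearrangement_iff hf hs q).1 hq⟩
  · rintro ⟨hs₀, hsq⟩
    have hs : s ∈ Ioo 0 (μ.real univ) :=
      ⟨hs₀, hsq.trans_le (distribution_le_measureReal_univ q)⟩
    exact ⟨(lt_decreasingRearrangement_iff hf hs q).2 hsq, hs⟩

theorem map_decreasingRearrangement (hf : Measurable f) :
    (volume.restrict (Ioo 0 (μ.real univ))).map (decreasingRearrangement μ f) = μ.map f := by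
  refine (Measure.ext_of_Ioi (μ.map f) _ fun q => ?_).symm
  rw [Measure.map_apply hf measurableSet_Ioi,
    Measure.map_apply_of_aemeasurable (aemeasurable_decreasingRearrangement hf) measurableSet_Ioi,
    Measure.restrict_apply' measurableSet_Ioo, preimage_Ioi_decreasingRearrangement_inter_Ioo hf,
    Real.volume_Ioo, sub_zero, distribution, ofReal_measureReal]

theorem integral_comp_decreasingRearrangement {E : Type*} [NormedAddCommGroup E]
    [NormedSpace ℝ E] (hf : Measurable f) {φ : ℝ → E}
    (hφ : AEStronglyMeasurable φ (μ.map f)) :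
    ∫ s in Ioo 0 (μ.real univ), φ (decreasingRearrangement μ f s) = ∫ x, φ (f x) ∂μ := by
  have hmap := map_decreasingRearrangement (μ := μ) hf
  rw [← integral_map (aemeasurable_decreasingRearrangement hf) (hmap ▸ hφ), hmap,
    integral_map hf.aemeasurable hφ]

end FiniteMeasure

end MeasureTheory

lemma distFun_eq_distribution {d : ℕ} {Ω : Set (Fin d → ℝ)} {u : (Fin d → ℝ) → ℝ}
    (hu : Measurable u) : distFun Ω u = distribution (volume.restrict Ω) u := by
  ext q
  rw [distFun, distribution, measureReal_def, Measure.restrict_apply (hu measurableSet_Ioi)]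
  congr 2
  ext x
  exact and_comm

lemma decRear_eq_decreasingRearrangement {d : ℕ} {Ω : Set (Fin d → ℝ)}
    {u : (Fin d → ℝ) → ℝ} (hu : Measurable u) :
    decRear Ω u = decreasingRearrangement (volume.restrict Ω) u := by
  funext s
  rw [decRear, decreasingRearrangement, distFun_eq_distribution hu]

theorem neighborhood_filter_contrast_change_general {d : ℕ} (Ω : Set (Fin d → ℝ))
    (hΩb : Bornology.IsBounded Ω)
    (Kh : ℝ → ℝ) (hKm : Measurable Kh)
    (u : (Fin d → ℝ) → ℝ) (hum : Measurable u) :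
    ∃ g : ℝ → ℝ,
      (g = fun t =>
        (∫ s in Ioo 0 (volume Ω).toReal, Kh (t - decRear Ω u s) * decRear Ω u s) /
          (∫ s in Ioo 0 (volume Ω).toReal, Kh (t - decRear Ω u s))) ∧
      ∀ᵐ x ∂(volume.restrict Ω),
        (∫ y in Ω, Kh (u x - u y) * u y) / (∫ y in Ω, Kh (u x - u y)) = g (u x) := by
  have : IsFiniteMeasure (volume.restrict Ω) := isFiniteMeasure_restrict.2 hΩb.measure_lt_top.ne
  have htransfer (φ : ℝ → ℝ) (hφ : Measurable φ) :
      ∫ y in Ω, φ (u y) = ∫ s in Ioo 0 (volume Ω).toReal, φ (decRear Ω u s) := by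
    rw [← measureReal_def, ← measureReal_restrict_apply_univ,
      decRear_eq_decreasingRearrangement hum,
      integral_comp_decreasingRearrangement hum hφ.aestronglyMeasurable]
  refine ⟨_, rfl, ae_of_all _ fun x => ?_⟩
  have hK : Measurable fun w => Kh (u x - w) := hKm.comp (measurable_const.sub measurable_id)
  exact congrArg₂ (· / ·) (htransfer _ (hK.mul measurable_id)) (htransfer _ hK)

/-- The neighborhood filter with homogeneous spatial kernel is a contrast
change: `Fu(x) = g(u(x))` for a.e. `x ∈ Ω`, where
`g(t) = (∫_0^{|Ω|} K_h(t − u_*(s)) u_*(s) ds)/(∫_0^{|Ω|} K_h(t − u_*(s)) ds)`. -/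
theorem neighborhood_filter_contrast_change {d : ℕ} (Ω : Set (Fin d → ℝ))
    (hΩo : IsOpen Ω) (hΩb : Bornology.IsBounded Ω)
    (Kh : ℝ → ℝ) (hKm : Measurable Kh) (hKpos : ∀ ξ, 0 ≤ Kh ξ)
    (hKb : ∃ C, ∀ ξ, Kh ξ ≤ C)
    (u : (Fin d → ℝ) → ℝ) (hum : Measurable u)
    (hu : MemLp u ⊤ (volume.restrict Ω))
    (hden : ∀ x ∈ Ω, 0 < ∫ y in Ω, Kh (u x - u y)) :
    ∃ g : ℝ → ℝ,
      (g = fun t =>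
        (∫ s in Ioo 0 (volume Ω).toReal, Kh (t - decRear Ω u s) * decRear Ω u s) /
          (∫ s in Ioo 0 (volume Ω).toReal, Kh (t - decRear Ω u s))) ∧
      ∀ᵐ x ∂(volume.restrict Ω),
        (∫ y in Ω, Kh (u x - u y) * u y) / (∫ y in Ω, Kh (u x - u y)) = g (u x) :=
  neighborhood_filter_contrast_change_general Ω hΩb Kh hKm u hum
end
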